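/- arXiv:2406.06868 — 6 statements merged into one kernel-verified Lean document; each statement's English description precedes it below -/
import Mathlib

section
/- Let X₀, X₁, …, X_n be measurable spaces, let μ be a probability measure on X₀, and for each i ∈ {1, …, n} let κ_i and η_i be Markov kernels from X₀ × ⋯ × X_{i−1} to X_i. Form the trajectory measures P_κ = μ ⊗ κ₁ ⊗ ⋯ ⊗ κ_n and P_η = μ ⊗ η₁ ⊗ ⋯ ⊗ η_n on X₀ × ⋯ × X_n by iterated composition-product. If for each i one has sup over histories h ∈ X₀ × ⋯ × X_{i−1} of ‖κ_i(h) − η_i(h)‖_TV ≤ ε_i, then ‖P_κ − P_η‖_TV ≤ Σ_{i=1}^n ε_i. (This telescoping bound controls, uniformly over partitions, the difference between two discretized path measures built from treatment/covariate kernels that are close step-by-step in total variation.) -/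
open MeasureTheory ProbabilityTheory
open scoped ENNReal

/-- Total variation norm of the difference of two finite measures:
`‖μ − ν‖_TV = |μ − ν|(X)`, the total mass of the total variation measure of the
signed measure `μ − ν`. -/
noncomputable def tvDist {α : Type*} [MeasurableSpace α] (μ ν : Measure α)
    [IsFiniteMeasure μ] [IsFiniteMeasure ν] : ℝ≥0∞ :=
  (μ.toSignedMeasure - ν.toSignedMeasure).totalVariation Set.univ

/-- The space of histories (trajectories) `X₀ × ⋯ × Xₙ`, built as iterated
binary products. -/
def Hist (X : ℕ → Type*) : ℕ → Type _
  | 0 => X 0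
  | n + 1 => Hist X n × X (n + 1)

noncomputable instance Hist.instMeasurableSpace (X : ℕ → Type*)
    [∀ i, MeasurableSpace (X i)] : ∀ n, MeasurableSpace (Hist X n)
  | 0 => inferInstanceAs (MeasurableSpace (X 0))
  | n + 1 => @Prod.instMeasurableSpace _ _ (Hist.instMeasurableSpace X n) _

/-- The trajectory measure `μ ⊗ κ₁ ⊗ ⋯ ⊗ κₙ` on `X₀ × ⋯ × Xₙ`, built by
iterated composition-product of the initial law `μ` with the history-dependent
Markov kernels `κ i : Hist X i → Prob (X (i+1))`. -/
noncomputable def traj {X : ℕ → Type*} [∀ i, MeasurableSpace (X i)]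
    (μ : Measure (X 0)) (κ : ∀ i, Kernel (Hist X i) (X (i + 1))) :
    ∀ n, Measure (Hist X n)
  | 0 => μ
  | n + 1 => (traj μ κ n) ⊗ₘ (κ n)

instance traj.instIsProbabilityMeasure {X : ℕ → Type*} [∀ i, MeasurableSpace (X i)]
    (μ : Measure (X 0)) [IsProbabilityMeasure μ]
    (κ : ∀ i, Kernel (Hist X i) (X (i + 1))) [∀ i, IsMarkovKernel (κ i)] :
    ∀ n, IsProbabilityMeasure (traj μ κ n)
  | 0 => inferInstanceAs (IsProbabilityMeasure μ)
  | n + 1 => by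
      haveI := traj.instIsProbabilityMeasure μ κ n
      exact inferInstanceAs (IsProbabilityMeasure ((traj μ κ n) ⊗ₘ (κ n)))

/-! Pass from `μ ⊗ κ` to `ν ⊗ η` through `μ ⊗ η`. Changing the kernel costs at most `ε`: the
signed mass of `E ⊆ α × β` under `μ ⊗ κ − μ ⊗ η` is the `μ`-average of the signed masses of its
sections, and a Hahn set of the difference shows that its total variation is attained on a pair
`E, Eᶜ`. Changing the measure costs at most `tvDist μ ν`: the Jordan parts `p, q` of `μ − ν`
satisfy `μ + q = ν + p`, an identity that survives composition with a Markov kernel, which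
preserves total masses. Induction along the trajectory sums the one-step errors. -/

namespace MeasureTheory.SignedMeasure

variable {α : Type*} [MeasurableSpace α] (s : SignedMeasure α)

lemma exists_totalVariation_univ_eq :
    ∃ i, MeasurableSet i ∧ s.totalVariation Set.univ = ‖s i‖ₑ + ‖s iᶜ‖ₑ := by
  obtain ⟨i, hi, hpos, hneg, hposPart, hnegPart⟩ := s.toJordanDecomposition_spec
  refine ⟨i, hi, ?_⟩
  have hi_nonneg : 0 ≤ s i := s.nonneg_of_zero_le_restrict hpos
  have hic_nonpos : s iᶜ ≤ 0 := s.nonpos_of_restrict_le_zero hneg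
  rw [totalVariation, Measure.add_apply, hposPart, hnegPart,
    toMeasureOfZeroLE_apply _ _ _ MeasurableSet.univ,
    toMeasureOfLEZero_apply _ _ _ MeasurableSet.univ, Real.enorm_of_nonneg hi_nonneg,
    ← enorm_neg (s iᶜ), Real.enorm_of_nonneg (neg_nonneg.mpr hic_nonpos)]
  simp only [Set.inter_univ]
  rw [ENNReal.ofReal_eq_coe_nnreal hi_nonneg,
    ENNReal.ofReal_eq_coe_nnreal (neg_nonneg.mpr hic_nonpos)]

lemma enorm_add_enorm_compl_le_totalVariation {A : Set α} (hA : MeasurableSet A) :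
    ‖s A‖ₑ + ‖s Aᶜ‖ₑ ≤ s.totalVariation Set.univ := by
  rw [← measure_add_measure_compl hA]
  exact add_le_add (s.enorm_le_totalVariation A) (s.enorm_le_totalVariation Aᶜ)

lemma totalVariation_univ_le {c : ℝ≥0∞}
    (h : ∀ A, MeasurableSet A → ‖s A‖ₑ + ‖s Aᶜ‖ₑ ≤ c) : s.totalVariation Set.univ ≤ c := by
  obtain ⟨i, hi, heq⟩ := s.exists_totalVariation_univ_eq
  exact heq ▸ h i hi

end MeasureTheory.SignedMeasure

section tvDist

variable {α : Type*} [MeasurableSpace α]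

lemma tvDist_self (μ : Measure α) [IsFiniteMeasure μ] : tvDist μ μ = 0 := by
  simp [tvDist, SignedMeasure.totalVariation_zero]

lemma tvDist_triangle (μ ν ρ : Measure α) [IsFiniteMeasure μ] [IsFiniteMeasure ν]
    [IsFiniteMeasure ρ] : tvDist μ ρ ≤ tvDist μ ν + tvDist ν ρ := by
  simp only [tvDist, SignedMeasure.totalVariation_eq_variation, ← Measure.add_apply]
  rw [← sub_add_sub_cancel _ ν.toSignedMeasure]
  exact VectorMeasure.variation_add_le _

lemma tvDist_le_of_add_eq_add {μ ν p q : Measure α} [IsFiniteMeasure μ] [IsFiniteMeasure ν]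
    [IsFiniteMeasure p] [IsFiniteMeasure q] (h : μ + q = ν + p) :
    tvDist μ ν ≤ p Set.univ + q Set.univ := by
  have hsub : μ.toSignedMeasure - ν.toSignedMeasure = p.toSignedMeasure - q.toSignedMeasure := by
    rw [sub_eq_sub_iff_add_eq_add, ← Measure.toSignedMeasure_add, Measure.toSignedMeasure_congr h,
      Measure.toSignedMeasure_add, add_comm]
  rw [tvDist, hsub, SignedMeasure.totalVariation_eq_variation, ← Measure.add_apply]
  refine (VectorMeasure.variation_sub_le _).trans ?_
  simp

lemma exists_add_eq_add_tvDist_eq (μ ν : Measure α) [IsFiniteMeasure μ] [IsFiniteMeasure ν] :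
    ∃ (p q : Measure α) (_ : IsFiniteMeasure p) (_ : IsFiniteMeasure q),
      μ + q = ν + p ∧ p Set.univ + q Set.univ = tvDist μ ν := by
  set s := μ.toSignedMeasure - ν.toSignedMeasure
  refine ⟨s.toJordanDecomposition.posPart, s.toJordanDecomposition.negPart, inferInstance,
    inferInstance, ?_, rfl⟩
  rw [← Measure.toSignedMeasure_eq_toSignedMeasure_iff, Measure.toSignedMeasure_add,
    Measure.toSignedMeasure_add, add_comm ν.toSignedMeasure, ← sub_eq_sub_iff_add_eq_add]
  exact s.toSignedMeasure_toJordanDecomposition.symm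

end tvDist

section compProd

variable {α β : Type*} [MeasurableSpace α] [MeasurableSpace β]

lemma tvDist_compProd_left_le (μ ν : Measure α) [IsFiniteMeasure μ] [IsFiniteMeasure ν]
    (κ : Kernel α β) [IsMarkovKernel κ] : tvDist (μ ⊗ₘ κ) (ν ⊗ₘ κ) ≤ tvDist μ ν := by
  obtain ⟨p, q, _, _, hpq, hdist⟩ := exists_add_eq_add_tvDist_eq μ ν
  have h : μ ⊗ₘ κ + q ⊗ₘ κ = ν ⊗ₘ κ + p ⊗ₘ κ := by
    rw [← Measure.compProd_add_left, hpq, Measure.compProd_add_left]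
  calc tvDist (μ ⊗ₘ κ) (ν ⊗ₘ κ) ≤ (p ⊗ₘ κ) Set.univ + (q ⊗ₘ κ) Set.univ :=
        tvDist_le_of_add_eq_add h
    _ = tvDist μ ν := by simp [hdist]

lemma enorm_compProd_sub_apply_le (μ : Measure α) [IsFiniteMeasure μ] (κ η : Kernel α β)
    [IsFiniteKernel κ] [IsFiniteKernel η] {E : Set (α × β)} (hE : MeasurableSet E) :
    ‖((μ ⊗ₘ κ).toSignedMeasure - (μ ⊗ₘ η).toSignedMeasure) E‖ₑ
      ≤ ∫⁻ x, ‖((κ x).toSignedMeasure - (η x).toSignedMeasure) (Prod.mk x ⁻¹' E)‖ₑ ∂μ := by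
  have hκ := Kernel.measurable_kernel_prodMk_left (κ := κ) hE
  have hη := Kernel.measurable_kernel_prodMk_left (κ := η) hE
  have hint : ∀ (ρ : Kernel α β) [IsFiniteKernel ρ],
      Measurable (fun x => ρ x (Prod.mk x ⁻¹' E)) →
      Integrable (fun x => (ρ x (Prod.mk x ⁻¹' E)).toReal) μ := fun ρ _ hρ =>
    integrable_toReal_of_lintegral_ne_top hρ.aemeasurable
      (by rw [← Measure.compProd_apply hE]; exact measure_ne_top _ _)
  rw [Measure.toSignedMeasure_sub_apply hE, measureReal_def, measureReal_def,
    Measure.compProd_apply hE, Measure.compProd_apply hE,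
    ← integral_toReal hκ.aemeasurable (ae_of_all _ fun x => measure_lt_top _ _),
    ← integral_toReal hη.aemeasurable (ae_of_all _ fun x => measure_lt_top _ _),
    ← integral_sub (hint κ hκ) (hint η hη)]
  refine (enorm_integral_le_lintegral_enorm _).trans (le_of_eq ?_)
  congr with x
  rw [Measure.toSignedMeasure_sub_apply (measurable_prodMk_left hE), measureReal_def,
    measureReal_def]

lemma tvDist_compProd_right_le (μ : Measure α) [IsProbabilityMeasure μ] (κ η : Kernel α β)
    [IsFiniteKernel κ] [IsFiniteKernel η] {ε : ℝ≥0∞} (h : ∀ x, tvDist (κ x) (η x) ≤ ε) :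
    tvDist (μ ⊗ₘ κ) (μ ⊗ₘ η) ≤ ε := by
  refine SignedMeasure.totalVariation_univ_le _ fun E hE => ?_
  set d : α → Set (α × β) → ℝ≥0∞ := fun x A =>
    ‖((κ x).toSignedMeasure - (η x).toSignedMeasure) (Prod.mk x ⁻¹' A)‖ₑ
  have hd : Measurable fun x => d x E := by
    simp only [d, Measure.toSignedMeasure_sub_apply (measurable_prodMk_left hE), measureReal_def]
    exact ((Kernel.measurable_kernel_prodMk_left hE).ennreal_toReal.sub
      (Kernel.measurable_kernel_prodMk_left hE).ennreal_toReal).enorm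
  calc _ ≤ ∫⁻ x, d x E ∂μ + ∫⁻ x, d x Eᶜ ∂μ :=
        add_le_add (enorm_compProd_sub_apply_le μ κ η hE)
          (enorm_compProd_sub_apply_le μ κ η hE.compl)
    _ = ∫⁻ x, (d x E + d x Eᶜ) ∂μ := (lintegral_add_left hd _).symm
    _ ≤ ∫⁻ _, ε ∂μ := lintegral_mono fun x =>
        (SignedMeasure.enorm_add_enorm_compl_le_totalVariation _
          (measurable_prodMk_left hE)).trans (h x)
    _ = ε := by simp

lemma tvDist_compProd_le (μ ν : Measure α) [IsProbabilityMeasure μ] [IsFiniteMeasure ν]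
    (κ η : Kernel α β) [IsFiniteKernel κ] [IsMarkovKernel η] {ε : ℝ≥0∞}
    (h : ∀ x, tvDist (κ x) (η x) ≤ ε) :
    tvDist (μ ⊗ₘ κ) (ν ⊗ₘ η) ≤ tvDist μ ν + ε :=
  calc tvDist (μ ⊗ₘ κ) (ν ⊗ₘ η)
      ≤ tvDist (μ ⊗ₘ κ) (μ ⊗ₘ η) + tvDist (μ ⊗ₘ η) (ν ⊗ₘ η) := tvDist_triangle _ _ _
    _ ≤ ε + tvDist μ ν :=
        add_le_add (tvDist_compProd_right_le μ κ η h) (tvDist_compProd_left_le μ ν η)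
    _ = tvDist μ ν + ε := add_comm _ _

end compProd

/-- Telescoping total variation bound for trajectory measures: if the
step-`i` kernels `κ i` and `η i` are within `ε i` of each other in total
variation, uniformly over histories, then the trajectory measures
`μ ⊗ κ₀ ⊗ ⋯ ⊗ κ_{n-1}` and `μ ⊗ η₀ ⊗ ⋯ ⊗ η_{n-1}` are within `Σ_{i<n} ε i`
in total variation. -/
theorem tvDist_traj_le {X : ℕ → Type*} [∀ i, MeasurableSpace (X i)]
    (μ : Measure (X 0)) [IsProbabilityMeasure μ]
    (κ η : ∀ i, Kernel (Hist X i) (X (i + 1)))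
    [∀ i, IsMarkovKernel (κ i)] [∀ i, IsMarkovKernel (η i)]
    (n : ℕ) (ε : ℕ → ℝ≥0∞)
    (hstep : ∀ i < n, ∀ h : Hist X i, tvDist ((κ i) h) ((η i) h) ≤ ε i) :
    tvDist (traj μ κ n) (traj μ η n) ≤ ∑ i ∈ Finset.range n, ε i := by
  induction n with
  | zero => exact (tvDist_self μ).trans_le zero_le
  | succ n ih =>
    calc tvDist (traj μ κ (n + 1)) (traj μ η (n + 1))
        ≤ tvDist (traj μ κ n) (traj μ η n) + ε n :=
          tvDist_compProd_le _ _ _ _ (hstep n n.lt_succ_self)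
      _ ≤ ∑ i ∈ Finset.range n, ε i + ε n :=
          add_le_add_left (ih fun i hi => hstep i (hi.trans n.lt_succ_self)) _
      _ = ∑ i ∈ Finset.range (n + 1), ε i := (Finset.sum_range_succ ε n).symm
end

section
/- Let X₀, X₁, …, X_n be standard Borel spaces, let μ be a probability measure on X₀, and for each i ∈ {1, …, n} let κ_i and η_i be Markov kernels from X₀ × ⋯ × X_{i−1} to X_i such that η_i(h) ≪ κ_i(h) for every history h (for μ-⊗κ-almost every history suffices). Let P_κ = μ ⊗ κ₁ ⊗ ⋯ ⊗ κ_n and P_η = μ ⊗ η₁ ⊗ ⋯ ⊗ η_n be the trajectory measures on X₀ × ⋯ × X_n. Then P_η ≪ P_κ and the Radon–Nikodym derivative factorizes as dP_η/dP_κ(x₀, …, x_n) = ∏_{i=1}^n [d η_i(x₀,…,x_{i−1}) / d κ_i(x₀,…,x_{i−1})](x_i) for P_κ-almost every trajectory; consequently, for every bounded measurable ν on X₀ × ⋯ × X_n, ∫ ν dP_η = ∫ ν · ∏_{i=1}^n w_i dP_κ where w_i is the i-th stepwise kernel Radon–Nikodym derivative. (This is the finite-partition inverse probability weighting formula: the IPW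 process Q_G equals the running product of stepwise Radon–Nikodym derivatives dG/dP of the regime's treatment kernels against the observed treatment kernels.) -/
/-!
By induction on `n`. Pointwise absolute continuity gives `η n = (κ n).withDensity (dη n/dκ n)`,
and by induction `P_η n = (P_κ n).withDensity (stepwiseRNProd κ η n)`; a composition-product of
a measure with density `f` and a kernel with density `g` is the composition-product with density
`f p.1 * g p.1 p.2`, which is the next running product. The density of a `withDensity` measure is
its Radon–Nikodym derivative, and the integral formula is the change of variables for it.
-/

open MeasureTheory ProbabilityTheory
open scoped ENNReal

/-- The running product of stepwise kernel Radon–Nikodym derivatives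
`∏_{i<n} [dη_i(x₀,…,x_{i-1}) / dκ_i(x₀,…,x_{i-1})](x_i)` along a trajectory. -/
noncomputable def stepwiseRNProd {X : ℕ → Type*} [∀ i, MeasurableSpace (X i)]
    [∀ i, StandardBorelSpace (X i)]
    (κ η : ∀ i, Kernel (Hist X i) (X (i + 1))) : ∀ n, Hist X n → ℝ≥0∞
  | 0, _ => 1
  | n + 1, h => stepwiseRNProd κ η n h.1 * Kernel.rnDeriv (η n) (κ n) h.1 h.2

namespace MeasureTheory.Measure

variable {α β : Type*} {mα : MeasurableSpace α} {mβ : MeasurableSpace β}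
  {μ : Measure α} {κ : Kernel α β} {f : α → ℝ≥0∞}

lemma withDensity_compProd [SFinite μ] [IsSFiniteKernel κ] (hf : Measurable f) :
    μ.withDensity f ⊗ₘ κ = (μ ⊗ₘ κ).withDensity (fun p ↦ f p.1) := by
  ext s hs
  rw [compProd_apply hs, lintegral_withDensity_eq_lintegral_mul _ hf
    (Kernel.measurable_kernel_prodMk_left hs), withDensity_apply _ hs, ← lintegral_indicator hs,
    lintegral_compProd (Measurable.indicator (by fun_prop) hs)]
  congr with a
  rw [Pi.mul_apply, ← lintegral_indicator_const (measurable_prodMk_left hs)]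
  rfl

lemma withDensity_compProd_withDensity [SFinite μ] [IsSFiniteKernel κ] {g : α → β → ℝ≥0∞}
    [IsSFiniteKernel (κ.withDensity g)] (hf : Measurable f) (hg : Measurable (Function.uncurry g)) :
    μ.withDensity f ⊗ₘ κ.withDensity g = (μ ⊗ₘ κ).withDensity (fun p ↦ f p.1 * g p.1 p.2) := by
  rw [withDensity_compProd hf, compProd_withDensity hg,
    ← withDensity_mul _ (by fun_prop) (by fun_prop : Measurable fun p : α × β ↦ f p.1), mul_comm]
  rfl

end MeasureTheory.Measure

lemma ProbabilityTheory.Kernel.withDensity_rnDeriv_eq_self {α γ : Type*} {mα : MeasurableSpace α}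
    {mγ : MeasurableSpace γ} [MeasurableSpace.CountableOrCountablyGenerated α γ]
    {κ η : Kernel α γ} [IsFiniteKernel κ] [IsFiniteKernel η] (h : ∀ a, η a ≪ κ a) :
    κ.withDensity (η.rnDeriv κ) = η :=
  Kernel.ext fun a ↦ withDensity_rnDeriv_eq (h a)

section Trajectory

variable {X : ℕ → Type*} [∀ i, MeasurableSpace (X i)] [∀ i, StandardBorelSpace (X i)]
  (κ η : ∀ i, Kernel (Hist X i) (X (i + 1)))

lemma measurable_stepwiseRNProd : ∀ n, Measurable (stepwiseRNProd κ η n)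
  | 0 => measurable_const
  | n + 1 => ((measurable_stepwiseRNProd n).comp measurable_fst).mul
      (Kernel.measurable_rnDeriv (η n) (κ n))

lemma traj_eq_withDensity_stepwiseRNProd (μ : Measure (X 0)) [IsProbabilityMeasure μ]
    [∀ i, IsMarkovKernel (κ i)] [∀ i, IsMarkovKernel (η i)] :
    ∀ n, (∀ i < n, ∀ h, η i h ≪ κ i h) →
      traj μ η n = (traj μ κ n).withDensity (stepwiseRNProd κ η n)
  | 0, _ => withDensity_one.symm
  | n + 1, hac => by
    have ih := traj_eq_withDensity_stepwiseRNProd μ n fun i hi ↦ hac i (by omega)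
    have hη := Kernel.withDensity_rnDeriv_eq_self (hac n n.lt_succ_self)
    have : IsSFiniteKernel ((κ n).withDensity ((η n).rnDeriv (κ n))) := hη ▸ inferInstance
    rw [traj, traj, ih, ← hη, Measure.withDensity_compProd_withDensity
      (measurable_stepwiseRNProd κ η n) (Kernel.measurable_rnDeriv _ _)]
    rfl

end Trajectory

theorem traj_absolutelyContinuous_rnDeriv_prod_general {X : ℕ → Type*}
    [∀ i, MeasurableSpace (X i)] [∀ i, StandardBorelSpace (X i)]
    (μ : Measure (X 0)) [IsProbabilityMeasure μ]
    (κ η : ∀ i, Kernel (Hist X i) (X (i + 1)))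
    [∀ i, IsMarkovKernel (κ i)] [∀ i, IsMarkovKernel (η i)]
    (n : ℕ) (hac : ∀ i < n, ∀ h : Hist X i, (η i) h ≪ (κ i) h) :
    traj μ η n ≪ traj μ κ n ∧
      (traj μ η n).rnDeriv (traj μ κ n) =ᵐ[traj μ κ n] stepwiseRNProd κ η n ∧
      ∀ (ν : Hist X n → ℝ), Measurable ν → ∀ C : ℝ, (∀ h, |ν h| ≤ C) →
        ∫ h, ν h ∂(traj μ η n)
          = ∫ h, ν h * (stepwiseRNProd κ η n h).toReal ∂(traj μ κ n) := by
  have h_eq := traj_eq_withDensity_stepwiseRNProd κ η μ n hac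
  have h_ac : traj μ η n ≪ traj μ κ n := h_eq ▸ withDensity_absolutelyContinuous _ _
  have h_rn : (traj μ η n).rnDeriv (traj μ κ n) =ᵐ[traj μ κ n] stepwiseRNProd κ η n :=
    h_eq ▸ Measure.rnDeriv_withDensity _ (measurable_stepwiseRNProd κ η n)
  refine ⟨h_ac, h_rn, fun ν _ _ _ ↦ ?_⟩
  rw [← integral_rnDeriv_smul h_ac]
  refine integral_congr_ae ?_
  filter_upwards [h_rn] with h hh
  rw [hh, smul_eq_mul, mul_comm]

/-- Finite-partition inverse probability weighting formula: if the stepwise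
kernels satisfy `η i (h) ≪ κ i (h)` for every history, then the trajectory
measure `P_η` is absolutely continuous with respect to `P_κ`, its
Radon–Nikodym derivative factorizes `P_κ`-a.e. as the product of the stepwise
kernel Radon–Nikodym derivatives, and consequently every bounded measurable
`ν` satisfies `∫ ν dP_η = ∫ ν · ∏ᵢ wᵢ dP_κ`. -/
theorem traj_absolutelyContinuous_rnDeriv_prod {X : ℕ → Type*}
    [∀ i, MeasurableSpace (X i)] [∀ i, StandardBorelSpace (X i)] [∀ i, Nonempty (X i)]
    (μ : Measure (X 0)) [IsProbabilityMeasure μ]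
    (κ η : ∀ i, Kernel (Hist X i) (X (i + 1)))
    [∀ i, IsMarkovKernel (κ i)] [∀ i, IsMarkovKernel (η i)]
    (n : ℕ) (hac : ∀ i < n, ∀ h : Hist X i, (η i) h ≪ (κ i) h) :
    traj μ η n ≪ traj μ κ n ∧
      (traj μ η n).rnDeriv (traj μ κ n) =ᵐ[traj μ κ n] stepwiseRNProd κ η n ∧
      ∀ (ν : Hist X n → ℝ), Measurable ν → ∀ C : ℝ, (∀ h, |ν h| ≤ C) →
        ∫ h, ν h ∂(traj μ η n)
          = ∫ h, ν h * (stepwiseRNProd κ η n h).toReal ∂(traj μ κ n) :=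
  traj_absolutelyContinuous_rnDeriv_prod_general μ κ η n hac
end

section
/- (Finite-partition identification of the g-computation process.) In the interlaced-filtration setup, define for adapted processes H = (H_k)_{k=0}^K and Q = (Q_k)_{k=0}^K the estimating function Ξ_gcomp(H, Q) = Q_K (ν − H_K) + Σ_{j=0}^{K−1} Q_j (E_{P'}[H_{j+1} | 𝓗_j] − H_j), and let H*_k = E_{P'}[ν | 𝓖_k] be the g-computation process. Then: (i) for every bounded adapted process Q, E_P[Ξ_gcomp(H*, Q)] = 0; and (ii) conversely, if a bounded adapted process H satisfies E_P[Ξ_gcomp(H, Q)] = 0 for every bounded adapted process Q, then H_k = E_{P'}[ν | 𝓖_k] almost surely for every k = 0, …, K. -/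
/-! By the tower property under `P'` and the shared transitions, the innovation
`P'[ν|𝓗_j] - P'[ν|𝓖_j]` has vanishing `P`-conditional mean given `𝓖_j`, and `H*_K = ν`; so every
summand of `Ξ_gcomp(H*, Q)` is `P`-centred. Conversely, testing `Ξ_gcomp(H, ·)` against processes
supported at a single index `k` identifies `H_k` as the `P`-conditional expectation given `𝓖_k` of
`ν` (for `k = K`) or of `P'[H_{k+1}|𝓗_k]` (for `k < K`), and backward induction from `k = K` turns
this into `H_k = P'[ν|𝓖_k]`. -/

open MeasureTheory
open scoped ENNReal MeasureTheory

variable {Ω : Type*}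

/-- A process `(H_k)` is adapted to the filtration `(𝓖_k)` if `H_k` is
`𝓖_k`-measurable for each `k`. -/
def IsAdapted (G : ℕ → MeasurableSpace Ω) (H : ℕ → Ω → ℝ) : Prop :=
  ∀ k, Measurable[G k] (H k)

/-- A process `(H_k)` is (uniformly) bounded. -/
def IsBddProc (H : ℕ → Ω → ℝ) : Prop :=
  ∃ C : ℝ, ∀ k ω, |H k ω| ≤ C

/-- The finite-partition g-computation estimating function
`Ξ_gcomp(H, Q) = Q_K (ν − H_K) + Σ_{j=0}^{K−1} Q_j (E_{P'}[H_{j+1} | 𝓗_j] − H_j)`. -/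
noncomputable def XiGcomp {mΩ : MeasurableSpace Ω} (P' : Measure Ω) (K : ℕ)
    (Hf : ℕ → MeasurableSpace Ω) (ν : Ω → ℝ) (H Q : ℕ → Ω → ℝ) (ω : Ω) : ℝ :=
  Q K ω * (ν ω - H K ω)
    + ∑ j ∈ Finset.range K, Q j ω * ((P'[H (j + 1)|Hf j]) ω - H j ω)

section ConditionalExpectation

variable {m mΩ : MeasurableSpace Ω} {μ : Measure Ω}

lemma integrable_condExp_of_absolutelyContinuous {P P' : Measure Ω} [IsFiniteMeasure P]
    (hPP' : P ≪ P') (hm : m ≤ mΩ) {f : Ω → ℝ} {C : ℝ} (hf : ∀ ω, |f ω| ≤ C) :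
    Integrable (P'[f|m]) P :=
  .of_bound (stronglyMeasurable_condExp.mono hm).aestronglyMeasurable C
    (hPP'.ae_le (ae_bdd_abs_condExp_of_ae_bdd_abs (ae_of_all _ hf)))

theorem ae_eq_condExp_iff_forall_integral_mul_sub_eq_zero [IsFiniteMeasure μ] (hm : m ≤ mΩ)
    {g h : Ω → ℝ} (hg : Integrable g μ) (hhm : StronglyMeasurable[m] h) (hh : Integrable h μ) :
    (∀ q : Ω → ℝ, Measurable[m] q → (∃ C, ∀ ω, |q ω| ≤ C) →
      ∫ ω, q ω * (g ω - h ω) ∂μ = 0) ↔ h =ᵐ[μ] μ[g|m] := by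
  constructor
  · intro htest
    refine ae_eq_condExp_of_forall_setIntegral_eq hm hg (fun _ _ _ => hh.integrableOn)
      (fun s hs _ => ?_) hhm.aestronglyMeasurable
    have hs_indicator : ∫ ω, s.indicator 1 ω * (g ω - h ω) ∂μ = ∫ ω in s, (g ω - h ω) ∂μ := by
      rw [← integral_indicator (hm s hs)]
      congr with ω
      by_cases hω : ω ∈ s <;> simp [hω]
    have hs_test := htest (s.indicator 1) (Measurable.indicator (by exact measurable_const) hs)
      ⟨1, fun ω => by by_cases hω : ω ∈ s <;> simp [hω]⟩
    rw [hs_indicator, integral_sub hg.integrableOn hh.integrableOn, sub_eq_zero] at hs_test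
    exact hs_test.symm
  · rintro hh_eq q hqm ⟨C, hC⟩
    have hq : StronglyMeasurable[m] q := hqm.stronglyMeasurable
    have hqgh : Integrable (q * (g - h)) μ :=
      (hg.sub hh).bdd_mul (hq.mono hm).aestronglyMeasurable (ae_of_all _ hC)
    have hcond : μ[q * (g - h)|m] =ᵐ[μ] 0 := by
      filter_upwards [condExp_mul_of_stronglyMeasurable_left hq hqgh (hg.sub hh),
        condExp_sub hg hh m, hh_eq] with ω h_pull h_sub h_eq
      simp [h_pull, h_sub, condExp_of_stronglyMeasurable hm hhm hh, h_eq]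
    calc ∫ ω, q ω * (g ω - h ω) ∂μ = ∫ ω, μ[q * (g - h)|m] ω ∂μ := (integral_condExp hm).symm
      _ = 0 := by simp [integral_congr_ae hcond]

end ConditionalExpectation

section SharedTransitions

variable {mΩ : MeasurableSpace Ω} {P P' : Measure Ω} {m₁ m₂ : MeasurableSpace Ω}

/-- The shared-covariate-transition condition, with `m₁ = 𝓖_j` and `m₂ = 𝓗_j`. -/
def CondExpEqOnBounded (P P' : Measure Ω) (m₁ m₂ : MeasurableSpace Ω) : Prop :=
  ∀ f : Ω → ℝ, Measurable[m₂] f → (∃ C, ∀ ω, |f ω| ≤ C) → P[f|m₁] =ᵐ[P] P'[f|m₁]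

/-- Truncating at `±C` reduces the `P'`-a.e. bounded case to the bounded one. -/
lemma CondExpEqOnBounded.condExp_ae_eq_of_ae_abs_le (hPP' : P ≪ P')
    (hshared : CondExpEqOnBounded P P' m₁ m₂) {f : Ω → ℝ} (hf : Measurable[m₂] f) {C : ℝ}
    (hfC : ∀ᵐ ω ∂P', |f ω| ≤ C) : P[f|m₁] =ᵐ[P] P'[f|m₁] := by
  set fC : Ω → ℝ := fun ω => max (min (f ω) C) (-C)
  have hfC_eq : fC =ᵐ[P'] f := hfC.mono fun ω hω => by
    simp only [fC, min_eq_left (abs_le.1 hω).2, max_eq_left (abs_le.1 hω).1]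
  have hfC_bdd : ∀ ω, |fC ω| ≤ |C| := fun ω => abs_le.2
    ⟨le_max_of_le_right (neg_le_neg (le_abs_self C)),
      max_le ((min_le_right _ _).trans (le_abs_self C)) (neg_le_abs C)⟩
  calc P[f|m₁] =ᵐ[P] P[fC|m₁] := condExp_congr_ae (hPP'.ae_eq hfC_eq).symm
    _ =ᵐ[P] P'[fC|m₁] :=
      hshared fC ((hf.min measurable_const).max measurable_const) ⟨|C|, hfC_bdd⟩
    _ =ᵐ[P] P'[f|m₁] := hPP'.ae_eq (condExp_congr_ae hfC_eq)

lemma CondExpEqOnBounded.condExp_condExp [IsFiniteMeasure P'] (hPP' : P ≪ P')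
    (hshared : CondExpEqOnBounded P P' m₁ m₂) (h₁₂ : m₁ ≤ m₂) (hm₂ : m₂ ≤ mΩ) {ν : Ω → ℝ}
    {C : ℝ} (hν : ∀ ω, |ν ω| ≤ C) : P[P'[ν|m₂]|m₁] =ᵐ[P] P'[ν|m₁] :=
  (hshared.condExp_ae_eq_of_ae_abs_le hPP' stronglyMeasurable_condExp.measurable
    (ae_bdd_abs_condExp_of_ae_bdd_abs (ae_of_all _ hν))).trans
    (hPP'.ae_eq (condExp_condExp_of_le h₁₂ hm₂))

end SharedTransitions

section XiGcomp

variable {mΩ : MeasurableSpace Ω} {P' : Measure Ω} {K k : ℕ} {Hf : ℕ → MeasurableSpace Ω}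
  {ν q : Ω → ℝ} {H : ℕ → Ω → ℝ}

lemma isAdapted_single {G : ℕ → MeasurableSpace Ω} (hq : Measurable[G k] q) :
    IsAdapted G (Pi.single k q) := fun j => by
  by_cases hj : j = k
  · subst hj; simpa using hq
  · simp only [Pi.single_apply, hj, if_false]
    exact measurable_const

lemma isBddProc_single (hq : ∃ C, ∀ ω, |q ω| ≤ C) : IsBddProc (Pi.single k q) := by
  obtain ⟨C, hC⟩ := hq
  refine ⟨max C 0, fun j ω => ?_⟩
  by_cases hj : j = k
  · subst hj
    simpa only [Pi.single_eq_same] using (hC ω).trans (le_max_left C 0)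
  · simp [hj]

lemma XiGcomp_single_self :
    XiGcomp P' K Hf ν H (Pi.single K q) = fun ω => q ω * (ν ω - H K ω) := by
  funext ω
  rw [XiGcomp, Finset.sum_eq_zero fun j hj => by
    simp [(Finset.mem_range.1 hj).ne]]
  simp

lemma XiGcomp_single_of_lt (hk : k < K) :
    XiGcomp P' K Hf ν H (Pi.single k q) = fun ω => q ω * (P'[H (k + 1)|Hf k] ω - H k ω) := by
  funext ω
  rw [XiGcomp, Finset.sum_eq_single_of_mem k (Finset.mem_range.2 hk)
    fun j _ hj => by simp [hj]]
  simp [hk.ne']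

lemma XiGcomp_eq_sum_of_eq (hK : H K = ν) (Q : ℕ → Ω → ℝ) :
    XiGcomp P' K Hf ν H Q =
      fun ω => ∑ j ∈ Finset.range K, Q j ω * (P'[H (j + 1)|Hf j] ω - H j ω) := by
  funext ω
  simp [XiGcomp, hK]

end XiGcomp

section Identification

variable {mΩ : MeasurableSpace Ω} {P P' : Measure Ω} {K : ℕ} {G Hf : ℕ → MeasurableSpace Ω}
  {ν : Ω → ℝ} {Cν : ℝ}

theorem integral_XiGcomp_condExp_eq_zero [IsFiniteMeasure P] [IsFiniteMeasure P'] (hPP' : P ≪ P')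
    (hGH : ∀ k, G k ≤ Hf k) (hHG : ∀ k, Hf k ≤ G (k + 1)) (hG : ∀ k, G k ≤ mΩ)
    (hHm : ∀ k, Hf k ≤ mΩ) (hshared : ∀ j < K, CondExpEqOnBounded P P' (G j) (Hf j))
    (hν : Measurable[G K] ν) (hνC : ∀ ω, |ν ω| ≤ Cν) {Q : ℕ → Ω → ℝ} (hQ : IsAdapted G Q)
    (hQb : IsBddProc Q) :
    ∫ ω, XiGcomp P' K Hf ν (fun k => P'[ν|G k]) Q ω ∂P = 0 := by
  obtain ⟨CQ, hCQ⟩ := hQb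
  have hK : P'[ν|G K] = ν := condExp_of_stronglyMeasurable (hG K) hν.stronglyMeasurable
    (.of_bound (hν.mono (hG K) le_rfl).aestronglyMeasurable Cν (ae_of_all _ hνC))
  have htower : ∀ᵐ ω ∂P, ∀ j, P'[P'[ν|G (j + 1)]|Hf j] ω = P'[ν|Hf j] ω :=
    ae_all_iff.2 fun j => hPP'.ae_eq (condExp_condExp_of_le (hHG j) (hG (j + 1)))
  have hint : ∀ m ≤ mΩ, Integrable (P'[ν|m]) P := fun m hm =>
    integrable_condExp_of_absolutelyContinuous hPP' hm hνC
  calc ∫ ω, XiGcomp P' K Hf ν (fun k => P'[ν|G k]) Q ω ∂P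
      = ∫ ω, ∑ j ∈ Finset.range K, Q j ω * (P'[ν|Hf j] ω - P'[ν|G j] ω) ∂P := by
        rw [XiGcomp_eq_sum_of_eq hK]
        refine integral_congr_ae (htower.mono fun ω hω => ?_)
        simp only [hω]
    _ = ∑ j ∈ Finset.range K, ∫ ω, Q j ω * (P'[ν|Hf j] ω - P'[ν|G j] ω) ∂P :=
        integral_finsetSum _ fun j _ => ((hint _ (hHm j)).sub (hint _ (hG j))).bdd_mul
          ((hQ j).mono (hG j) le_rfl).aestronglyMeasurable (ae_of_all _ (hCQ j))
    _ = 0 := Finset.sum_eq_zero fun j hj =>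
        ((ae_eq_condExp_iff_forall_integral_mul_sub_eq_zero (hG j) (hint _ (hHm j))
          stronglyMeasurable_condExp (hint _ (hG j))).2
          ((hshared j (Finset.mem_range.1 hj)).condExp_condExp hPP' (hGH j) (hHm j) hνC).symm)
          (Q j) (hQ j) ⟨CQ, hCQ j⟩

theorem ae_eq_condExp_of_integral_XiGcomp_eq_zero [IsFiniteMeasure P] [IsFiniteMeasure P']
    (hP'P : P' ≪ P) (hPP' : P ≪ P') (hGH : ∀ k, G k ≤ Hf k) (hHG : ∀ k, Hf k ≤ G (k + 1))
    (hG : ∀ k, G k ≤ mΩ) (hHm : ∀ k, Hf k ≤ mΩ)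
    (hshared : ∀ j < K, CondExpEqOnBounded P P' (G j) (Hf j))
    (hν : Measurable[G K] ν) (hνC : ∀ ω, |ν ω| ≤ Cν) {H : ℕ → Ω → ℝ} (hH : IsAdapted G H)
    (hHb : IsBddProc H)
    (hzero : ∀ Q : ℕ → Ω → ℝ, IsAdapted G Q → IsBddProc Q →
      ∫ ω, XiGcomp P' K Hf ν H Q ω ∂P = 0) {k : ℕ} (hk : k ≤ K) :
    H k =ᵐ[P] P'[ν|G k] := by
  obtain ⟨CH, hCH⟩ := hHb
  have hHint : ∀ j, Integrable (H j) P := fun j =>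
    .of_bound ((hH j).mono (hG j) le_rfl).aestronglyMeasurable CH (ae_of_all _ (hCH j))
  have htest : ∀ j q, Measurable[G j] q → (∃ C, ∀ ω, |q ω| ≤ C) →
      ∫ ω, XiGcomp P' K Hf ν H (Pi.single j q) ω ∂P = 0 := fun _ _ hq hqb =>
    hzero _ (isAdapted_single hq) (isBddProc_single hqb)
  induction hk using Nat.decreasingInduction with
  | self =>
    have hνint : Integrable ν P' :=
      .of_bound (hν.mono (hG K) le_rfl).aestronglyMeasurable Cν (ae_of_all _ hνC)
    have hνint' : Integrable ν P :=
      .of_bound (hν.mono (hG K) le_rfl).aestronglyMeasurable Cν (ae_of_all _ hνC)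
    have hHK := (ae_eq_condExp_iff_forall_integral_mul_sub_eq_zero (hG K) hνint'
      (hH K).stronglyMeasurable (hHint K)).1 fun q hq hqb => by
        simpa only [XiGcomp_single_self] using htest K q hq hqb
    rw [condExp_of_stronglyMeasurable (hG K) hν.stronglyMeasurable hνint]
    rwa [condExp_of_stronglyMeasurable (hG K) hν.stronglyMeasurable hνint'] at hHK
  | of_succ k hk ih =>
    have hHk := (ae_eq_condExp_iff_forall_integral_mul_sub_eq_zero (hG k)
      (integrable_condExp_of_absolutelyContinuous hPP' (hHm k) (hCH (k + 1)))
      (hH k).stronglyMeasurable (hHint k)).1 fun q hq hqb => by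
        simpa only [XiGcomp_single_of_lt hk] using htest k q hq hqb
    have htower : P'[H (k + 1)|Hf k] =ᵐ[P] P'[ν|Hf k] := hPP'.ae_eq
      ((condExp_congr_ae (hP'P.ae_eq ih)).trans (condExp_condExp_of_le (hHG k) (hG (k + 1))))
    exact hHk.trans ((condExp_congr_ae htower).trans
      ((hshared k hk).condExp_condExp hPP' (hGH k) (hHm k) hνC))

end Identification

/-- Finite-partition identification of the g-computation process. In the
interlaced-filtration setup (`𝓖₀ ⊆ 𝓗₀ ⊆ 𝓖₁ ⊆ ⋯ ⊆ 𝓗_{K−1} ⊆ 𝓖_K`, `P` and `P'`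
equivalent, sharing the covariate transitions `E_P[·|𝓖_j] = E_{P'}[·|𝓖_j]` on
bounded `𝓗_j`-measurable functions), the g-computation process
`H*_k = E_{P'}[ν | 𝓖_k]` makes `E_P[Ξ_gcomp(H*, Q)] = 0` for every bounded
adapted `Q`; conversely, any bounded adapted `H` annihilating `Ξ_gcomp(H, Q)`
in `P`-mean against all bounded adapted `Q` equals `H*` almost surely. -/
theorem gcomputation_process_identification {mΩ : MeasurableSpace Ω}
    (P P' : Measure Ω) [IsProbabilityMeasure P] [IsProbabilityMeasure P']
    (hP'P : P' ≪ P) (hPP' : P ≪ P')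
    (K : ℕ) (G Hf : ℕ → MeasurableSpace Ω)
    (hGH : ∀ k, G k ≤ Hf k) (hHG : ∀ k, Hf k ≤ G (k + 1))
    (hG : ∀ k, G k ≤ mΩ) (hHm : ∀ k, Hf k ≤ mΩ)
    (hshared : ∀ j < K, ∀ f : Ω → ℝ, Measurable[Hf j] f → (∃ C, ∀ ω, |f ω| ≤ C) →
      P[f|G j] =ᵐ[P] P'[f|G j])
    (ν : Ω → ℝ) (hν : Measurable[G K] ν) (Cν : ℝ) (hνC : ∀ ω, |ν ω| ≤ Cν) :
    (∀ Q : ℕ → Ω → ℝ, IsAdapted G Q → IsBddProc Q →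
      ∫ ω, XiGcomp P' K Hf ν (fun k => P'[ν|G k]) Q ω ∂P = 0) ∧
    (∀ H : ℕ → Ω → ℝ, IsAdapted G H → IsBddProc H →
      (∀ Q : ℕ → Ω → ℝ, IsAdapted G Q → IsBddProc Q →
        ∫ ω, XiGcomp P' K Hf ν H Q ω ∂P = 0) →
      ∀ k ≤ K, H k =ᵐ[P] P'[ν|G k]) :=
  ⟨fun _ hQ hQb => integral_XiGcomp_condExp_eq_zero hPP' hGH hHG hG hHm hshared hν hνC hQ hQb,
    fun _ hH hHb hzero _ hk => ae_eq_condExp_of_integral_XiGcomp_eq_zero hP'P hPP' hGH hHG hG hHm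
      hshared hν hνC hH hHb hzero hk⟩
end

section
/- (Finite-partition double robustness.) In the interlaced-filtration setup, define for adapted processes H = (H_k)_{k=0}^K and Q = (Q_k)_{k=0}^K the doubly robust functional Ξ_DR(H, Q) = Q_K ν − Σ_{k=0}^{K} (Q_k H_k − Q_{k−1} E_{P'}[H_k | 𝓗_{k−1}]), with the conventions Q_{−1} = 1 and E_{P'}[H₀ | 𝓗_{−1}] = E_{P'}[H₀]. Let H*_k = E_{P'}[ν | 𝓖_k] and Q*_k = E_P[Z | 𝓖_k]. Then Ξ_DR is doubly robust: (i) for every bounded adapted process Q, E_P[Ξ_DR(H*, Q)] = E_{P'}[ν]; and (ii) for every bounded adapted process H, E_P[Ξ_DR(H, Q*)] = E_{P'}[ν]. That is, the functional remains unbiased for the intervened mean E_{P'}[ν] when either the g-computation process or the inverse probability weighting process is correct, but not necessarily both. -/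
open MeasureTheory
open scoped ENNReal MeasureTheory

variable {Ω : Type*}

/-- The finite-partition doubly robust functional
`Ξ_DR(H, Q) = Q_K ν − Σ_{k=0}^{K} (Q_k H_k − Q_{k−1} E_{P'}[H_k | 𝓗_{k−1}])`,
with conventions `Q_{−1} = 1` and `E_{P'}[H₀ | 𝓗_{−1}] = E_{P'}[H₀]`. -/
noncomputable def XiDR {mΩ : MeasurableSpace Ω} (P' : Measure Ω) (K : ℕ)
    (Hf : ℕ → MeasurableSpace Ω) (ν : Ω → ℝ) (H Q : ℕ → Ω → ℝ) (ω : Ω) : ℝ :=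
  Q K ω * ν ω
    - ((Q 0 ω * H 0 ω - ∫ ω', H 0 ω' ∂P')
        + ∑ j ∈ Finset.range K,
            (Q (j + 1) ω * H (j + 1) ω - Q j ω * (P'[H (j + 1)|Hf j]) ω))

/-! Integrated under `P` against a `𝓖_j`-measurable weight, a bounded `𝓗_j`-measurable function
may be replaced by its `E_P[· | 𝓖_j]`, which by the shared covariate transitions is its
`E_{P'}[· | 𝓖_j]`.

(i) With `H*_k = E_{P'}[ν | 𝓖_k]` the tower property turns `E_{P'}[H*_{j+1} | 𝓗_j]` into `H*_j`,
so the correction sum telescopes to `E_P[Q_K ν] − E_P[Q_0 H*_0]` and only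
`E_{P'}[H*_0] = E_{P'}[ν]` survives.

(ii) `Q*_k = E_P[Z | 𝓖_k]` turns `P`-integrals of bounded `𝓖_k`-measurable functions into
`P'`-integrals, so `E_P[Q*_{j+1} H_{j+1}]` and `E_P[Q*_j E_{P'}[H_{j+1} | 𝓗_j]]` both equal
`E_{P'}[H_{j+1}]`: every correction term has mean zero and `E_P[Q*_K ν] = E_{P'}[ν]`. -/

namespace MeasureTheory

variable {m mΩ : MeasurableSpace Ω} {μ : Measure Ω} {f q : Ω → ℝ} {C : ℝ}

lemma integrable_of_ae_abs_le [IsFiniteMeasure μ] (hf : AEStronglyMeasurable f μ)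
    (hfC : ∀ᵐ ω ∂μ, |f ω| ≤ C) : Integrable f μ :=
  .of_bound hf C (by simpa only [Real.norm_eq_abs] using hfC)

lemma Integrable.mul_of_ae_abs_le (hq : Integrable q μ) (hf : AEStronglyMeasurable f μ)
    (hfC : ∀ᵐ ω ∂μ, |f ω| ≤ C) : Integrable (fun ω => q ω * f ω) μ :=
  hq.mul_bdd hf (by simpa only [Real.norm_eq_abs] using hfC)

lemma integral_mul_condExp (hm : m ≤ mΩ) [IsFiniteMeasure μ] (hq : StronglyMeasurable[m] q)
    (hqf : Integrable (q * f) μ) (hf : Integrable f μ) :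
    ∫ ω, q ω * μ[f|m] ω ∂μ = ∫ ω, q ω * f ω ∂μ := by
  calc ∫ ω, q ω * μ[f|m] ω ∂μ = ∫ ω, μ[q * f|m] ω ∂μ :=
        integral_congr_ae (condExp_mul_of_stronglyMeasurable_left hq hqf hf).symm
    _ = ∫ ω, q ω * f ω ∂μ := integral_condExp hm

lemma StronglyMeasurable.exists_bdd_ae_eq (hf : StronglyMeasurable[m] f)
    (hfC : ∀ᵐ ω ∂μ, |f ω| ≤ C) :
    ∃ g : Ω → ℝ, Measurable[m] g ∧ (∃ C', ∀ ω, |g ω| ≤ C') ∧ f =ᵐ[μ] g := by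
  set s := {ω | |f ω| ≤ C}
  have hs : MeasurableSet[m] s := (measurable_abs.comp hf.measurable) measurableSet_Iic
  refine ⟨s.indicator f, hf.measurable.indicator hs, ⟨|C|, fun ω => ?_⟩,
    hfC.mono fun ω h => (Set.indicator_of_mem (s := s) h f).symm⟩
  by_cases hω : ω ∈ s
  · rw [Set.indicator_of_mem hω]
    exact hω.trans (le_abs_self C)
  · rw [Set.indicator_of_notMem hω, abs_zero]
    exact abs_nonneg C

end MeasureTheory

section TwoMeasures

variable {m m' mΩ : MeasurableSpace Ω} {P P' : Measure Ω} {f q : Ω → ℝ} {C : ℝ}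

lemma condExp_ae_eq_condExp_of_ae_bdd (hPP' : P ≪ P')
    (hshared : ∀ g : Ω → ℝ, Measurable[m'] g → (∃ C, ∀ ω, |g ω| ≤ C) →
      P[g|m] =ᵐ[P] P'[g|m])
    (hf : StronglyMeasurable[m'] f) (hfC : ∀ᵐ ω ∂P', |f ω| ≤ C) :
    P[f|m] =ᵐ[P] P'[f|m] := by
  obtain ⟨g, hgm, hgC, hfg⟩ := hf.exists_bdd_ae_eq hfC
  calc P[f|m] =ᵐ[P] P[g|m] := condExp_congr_ae (hPP'.ae_le hfg)
    _ =ᵐ[P] P'[g|m] := hshared g hgm hgC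
    _ =ᵐ[P] P'[f|m] := hPP'.ae_le (condExp_congr_ae hfg.symm)

lemma integral_mul_condExp_of_ae_bdd [IsFiniteMeasure P] (hm : m ≤ mΩ) (hm' : m' ≤ mΩ)
    (hPP' : P ≪ P')
    (hshared : ∀ g : Ω → ℝ, Measurable[m'] g → (∃ C, ∀ ω, |g ω| ≤ C) →
      P[g|m] =ᵐ[P] P'[g|m])
    (hq : StronglyMeasurable[m] q) (hqf : Integrable (q * f) P)
    (hf : StronglyMeasurable[m'] f) (hfC : ∀ᵐ ω ∂P', |f ω| ≤ C) :
    ∫ ω, q ω * P'[f|m] ω ∂P = ∫ ω, q ω * f ω ∂P := by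
  have hfP : Integrable f P :=
    integrable_of_ae_abs_le (hf.mono hm').aestronglyMeasurable (hPP'.ae_le hfC)
  calc ∫ ω, q ω * P'[f|m] ω ∂P = ∫ ω, q ω * P[f|m] ω ∂P := by
        refine integral_congr_ae ?_
        filter_upwards [condExp_ae_eq_condExp_of_ae_bdd hPP' hshared hf hfC] with ω hω
        rw [hω]
    _ = ∫ ω, q ω * f ω ∂P := integral_mul_condExp hm hq hqf hfP

lemma integral_condExp_rnDeriv_mul [IsFiniteMeasure P] [IsFiniteMeasure P'] (hm : m ≤ mΩ)
    (hP'P : P' ≪ P) (hf : StronglyMeasurable[m] f) (hfC : ∀ᵐ ω ∂P, |f ω| ≤ C) :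
    ∫ ω, P[fun ω' => (P'.rnDeriv P ω').toReal|m] ω * f ω ∂P = ∫ ω, f ω ∂P' := by
  set Z : Ω → ℝ := fun ω => (P'.rnDeriv P ω).toReal
  have hZ : Integrable Z P := Measure.integrable_toReal_rnDeriv
  have hfZ : Integrable (f * Z) P :=
    (hZ.mul_of_ae_abs_le (hf.mono hm).aestronglyMeasurable hfC).congr
      (.of_forall fun ω => mul_comm _ _)
  calc ∫ ω, P[Z|m] ω * f ω ∂P = ∫ ω, f ω * P[Z|m] ω ∂P := by simp_rw [mul_comm]
    _ = ∫ ω, f ω * Z ω ∂P := integral_mul_condExp hm hf hfZ hZ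
    _ = ∫ ω, f ω ∂P' := by
        simpa only [smul_eq_mul, mul_comm] using integral_rnDeriv_smul (f := f) hP'P

end TwoMeasures

lemma integral_XiDR {mΩ : MeasurableSpace Ω} {P P' : Measure Ω} [IsProbabilityMeasure P]
    {K : ℕ} {Hf : ℕ → MeasurableSpace Ω} {ν : Ω → ℝ} {H Q : ℕ → Ω → ℝ}
    (hQν : Integrable (fun ω => Q K ω * ν ω) P)
    (hQH : ∀ k, Integrable (fun ω => Q k ω * H k ω) P)
    (hQcond : ∀ j, Integrable (fun ω => Q j ω * P'[H (j + 1)|Hf j] ω) P) :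
    ∫ ω, XiDR P' K Hf ν H Q ω ∂P
      = ∫ ω, Q K ω * ν ω ∂P
        - ((∫ ω, Q 0 ω * H 0 ω ∂P - ∫ ω, H 0 ω ∂P')
          + ∑ j ∈ Finset.range K,
              (∫ ω, Q (j + 1) ω * H (j + 1) ω ∂P
                - ∫ ω, Q j ω * P'[H (j + 1)|Hf j] ω ∂P)) := by
  have hstep : ∀ j, Integrable (fun ω =>
      Q (j + 1) ω * H (j + 1) ω - Q j ω * P'[H (j + 1)|Hf j] ω) P :=
    fun j => (hQH (j + 1)).sub (hQcond j)
  have hinit : Integrable (fun ω => Q 0 ω * H 0 ω - ∫ ω, H 0 ω ∂P') P :=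
    (hQH 0).sub (integrable_const _)
  have hsum := integrable_finsetSum (Finset.range K) fun j _ => hstep j
  simp only [XiDR]
  rw [integral_sub hQν (by exact hinit.add hsum), integral_add hinit hsum,
    integral_sub (hQH 0) (integrable_const _), integral_const,
    integral_finsetSum _ fun j _ => hstep j]
  simp only [probReal_univ, one_smul]
  congr 2
  exact Finset.sum_congr rfl fun j _ => integral_sub (hQH (j + 1)) (hQcond j)

section DoubleRobustness

variable {mΩ : MeasurableSpace Ω} {P P' : Measure Ω} [IsProbabilityMeasure P]
  [IsFiniteMeasure P'] {K : ℕ} {G Hf : ℕ → MeasurableSpace Ω} {ν : Ω → ℝ} {Cν : ℝ}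

lemma integral_XiDR_of_H_eq_condExp (hPP' : P ≪ P')
    (hGH : ∀ k, G k ≤ Hf k) (hHG : ∀ k, Hf k ≤ G (k + 1))
    (hG : ∀ k, G k ≤ mΩ) (hHm : ∀ k, Hf k ≤ mΩ)
    (hshared : ∀ j < K, ∀ f : Ω → ℝ, Measurable[Hf j] f → (∃ C, ∀ ω, |f ω| ≤ C) →
      P[f|G j] =ᵐ[P] P'[f|G j])
    (hν : Measurable[G K] ν) (hνC : ∀ ω, |ν ω| ≤ Cν)
    {Q : ℕ → Ω → ℝ} (hQ : IsAdapted G Q) (hQb : IsBddProc Q) :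
    ∫ ω, XiDR P' K Hf ν (fun k => P'[ν|G k]) Q ω ∂P = ∫ ω, ν ω ∂P' := by
  obtain ⟨CQ, hCQ⟩ := hQb
  set H : ℕ → Ω → ℝ := fun k => P'[ν|G k]
  have hνP' : ∀ᵐ ω ∂P', |ν ω| ≤ Cν := .of_forall hνC
  have hHP' : ∀ k, ∀ᵐ ω ∂P', |H k ω| ≤ Cν := fun k => ae_bdd_abs_condExp_of_ae_bdd_abs hνP'
  have hHK : H K = ν := condExp_of_stronglyMeasurable (hG K) hν.stronglyMeasurable
    (integrable_of_ae_abs_le (hν.mono (hG K) le_rfl).aestronglyMeasurable hνP')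
  have hQint : ∀ k, Integrable (Q k) P := fun k =>
    integrable_of_ae_abs_le ((hQ k).mono (hG k) le_rfl).aestronglyMeasurable
      (.of_forall (hCQ k))
  have hQH : ∀ k, Integrable (fun ω => Q k ω * H k ω) P := fun k =>
    (hQint k).mul_of_ae_abs_le (stronglyMeasurable_condExp.mono (hG k)).aestronglyMeasurable
      (hPP'.ae_le (hHP' k))
  have hQcond : ∀ j, Integrable (fun ω => Q j ω * P'[H (j + 1)|Hf j] ω) P := fun j =>
    (hQint j).mul_of_ae_abs_le (stronglyMeasurable_condExp.mono (hHm j)).aestronglyMeasurable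
      (hPP'.ae_le (ae_bdd_abs_condExp_of_ae_bdd_abs (hHP' (j + 1))))
  have hstep : ∀ j < K,
      ∫ ω, Q j ω * P'[H (j + 1)|Hf j] ω ∂P = ∫ ω, Q j ω * H j ω ∂P := by
    intro j hj
    have htower : P'[P'[H (j + 1)|Hf j]|G j] =ᵐ[P'] H j :=
      (condExp_condExp_of_le (hGH j) (hHm j)).trans
        (condExp_condExp_of_le ((hGH j).trans (hHG j)) (hG (j + 1)))
    calc ∫ ω, Q j ω * P'[H (j + 1)|Hf j] ω ∂P
        = ∫ ω, Q j ω * P'[P'[H (j + 1)|Hf j]|G j] ω ∂P :=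
          (integral_mul_condExp_of_ae_bdd (hG j) (hHm j) hPP' (hshared j hj)
            (hQ j).stronglyMeasurable (hQcond j) stronglyMeasurable_condExp
            (ae_bdd_abs_condExp_of_ae_bdd_abs (hHP' (j + 1)))).symm
      _ = ∫ ω, Q j ω * H j ω ∂P := by
          refine integral_congr_ae ?_
          filter_upwards [hPP'.ae_le htower] with ω hω
          rw [hω]
  have hH0 : ∫ ω, H 0 ω ∂P' = ∫ ω, ν ω ∂P' := integral_condExp (hG 0)
  rw [integral_XiDR (hHK ▸ hQH K) hQH hQcond, hH0,
    Finset.sum_congr rfl fun j hj => by rw [hstep j (Finset.mem_range.mp hj)],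
    Finset.sum_range_sub (fun k => ∫ ω, Q k ω * H k ω ∂P), hHK]
  ring

lemma integral_XiDR_of_Q_eq_condExp_rnDeriv (hP'P : P' ≪ P) (hPP' : P ≪ P')
    (hG : ∀ k, G k ≤ mΩ) (hHm : ∀ k, Hf k ≤ mΩ)
    (hshared : ∀ j < K, ∀ f : Ω → ℝ, Measurable[Hf j] f → (∃ C, ∀ ω, |f ω| ≤ C) →
      P[f|G j] =ᵐ[P] P'[f|G j])
    (hν : Measurable[G K] ν) (hνC : ∀ ω, |ν ω| ≤ Cν)
    {H : ℕ → Ω → ℝ} (hH : IsAdapted G H) (hHb : IsBddProc H) :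
    ∫ ω, XiDR P' K Hf ν H (fun k => P[fun ω' => (P'.rnDeriv P ω').toReal|G k]) ω ∂P
      = ∫ ω, ν ω ∂P' := by
  obtain ⟨CH, hCH⟩ := hHb
  set Q : ℕ → Ω → ℝ := fun k => P[fun ω' => (P'.rnDeriv P ω').toReal|G k]
  have hcondP' : ∀ j, ∀ᵐ ω ∂P', |P'[H (j + 1)|Hf j] ω| ≤ CH := fun j =>
    ae_bdd_abs_condExp_of_ae_bdd_abs (.of_forall (hCH (j + 1)))
  have hQν : Integrable (fun ω => Q K ω * ν ω) P :=
    integrable_condExp.mul_of_ae_abs_le (hν.mono (hG K) le_rfl).aestronglyMeasurable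
      (.of_forall hνC)
  have hQH : ∀ k, Integrable (fun ω => Q k ω * H k ω) P := fun k =>
    integrable_condExp.mul_of_ae_abs_le ((hH k).mono (hG k) le_rfl).aestronglyMeasurable
      (.of_forall (hCH k))
  have hQcond : ∀ j, Integrable (fun ω => Q j ω * P'[H (j + 1)|Hf j] ω) P := fun j =>
    integrable_condExp.mul_of_ae_abs_le
      (stronglyMeasurable_condExp.mono (hHm j)).aestronglyMeasurable (hPP'.ae_le (hcondP' j))
  have hQH_eq : ∀ k, ∫ ω, Q k ω * H k ω ∂P = ∫ ω, H k ω ∂P' := fun k =>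
    integral_condExp_rnDeriv_mul (hG k) hP'P (hH k).stronglyMeasurable (.of_forall (hCH k))
  have hstep : ∀ j < K, ∫ ω, Q j ω * P'[H (j + 1)|Hf j] ω ∂P = ∫ ω, H (j + 1) ω ∂P' := by
    intro j hj
    calc ∫ ω, Q j ω * P'[H (j + 1)|Hf j] ω ∂P
        = ∫ ω, Q j ω * P'[P'[H (j + 1)|Hf j]|G j] ω ∂P :=
          (integral_mul_condExp_of_ae_bdd (hG j) (hHm j) hPP' (hshared j hj)
            stronglyMeasurable_condExp (hQcond j) stronglyMeasurable_condExp (hcondP' j)).symm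
      _ = ∫ ω, P'[P'[H (j + 1)|Hf j]|G j] ω ∂P' :=
          integral_condExp_rnDeriv_mul (hG j) hP'P stronglyMeasurable_condExp
            (hPP'.ae_le (ae_bdd_abs_condExp_of_ae_bdd_abs (hcondP' j)))
      _ = ∫ ω, P'[H (j + 1)|Hf j] ω ∂P' := integral_condExp (hG j)
      _ = ∫ ω, H (j + 1) ω ∂P' := integral_condExp (hHm j)
  rw [integral_XiDR hQν hQH hQcond, hQH_eq 0,
    Finset.sum_congr rfl fun j hj => by rw [hstep j (Finset.mem_range.mp hj), hQH_eq (j + 1)],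
    integral_condExp_rnDeriv_mul (hG K) hP'P hν.stronglyMeasurable (.of_forall hνC)]
  simp

end DoubleRobustness

/-- Finite-partition double robustness. In the interlaced-filtration setup
(`𝓖₀ ⊆ 𝓗₀ ⊆ 𝓖₁ ⊆ ⋯ ⊆ 𝓗_{K−1} ⊆ 𝓖_K`, `P` and `P'` equivalent, sharing the
covariate transitions `E_P[·|𝓖_j] = E_{P'}[·|𝓖_j]` on bounded
`𝓗_j`-measurable functions), with `H*_k = E_{P'}[ν | 𝓖_k]` and
`Q*_k = E_P[dP'/dP | 𝓖_k]`, the functional `Ξ_DR` is doubly robust: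
`E_P[Ξ_DR(H*, Q)] = E_{P'}[ν]` for every bounded adapted `Q`, and
`E_P[Ξ_DR(H, Q*)] = E_{P'}[ν]` for every bounded adapted `H`. -/
theorem doubly_robust_identification {mΩ : MeasurableSpace Ω}
    (P P' : Measure Ω) [IsProbabilityMeasure P] [IsProbabilityMeasure P']
    (hP'P : P' ≪ P) (hPP' : P ≪ P')
    (K : ℕ) (G Hf : ℕ → MeasurableSpace Ω)
    (hGH : ∀ k, G k ≤ Hf k) (hHG : ∀ k, Hf k ≤ G (k + 1))
    (hG : ∀ k, G k ≤ mΩ) (hHm : ∀ k, Hf k ≤ mΩ)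
    (hshared : ∀ j < K, ∀ f : Ω → ℝ, Measurable[Hf j] f → (∃ C, ∀ ω, |f ω| ≤ C) →
      P[f|G j] =ᵐ[P] P'[f|G j])
    (ν : Ω → ℝ) (hν : Measurable[G K] ν) (Cν : ℝ) (hνC : ∀ ω, |ν ω| ≤ Cν) :
    (∀ Q : ℕ → Ω → ℝ, IsAdapted G Q → IsBddProc Q →
      ∫ ω, XiDR P' K Hf ν (fun k => P'[ν|G k]) Q ω ∂P = ∫ ω, ν ω ∂P') ∧
    (∀ H : ℕ → Ω → ℝ, IsAdapted G H → IsBddProc H →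
      ∫ ω, XiDR P' K Hf ν H
        (fun k => P[fun ω' => (P'.rnDeriv P ω').toReal|G k]) ω ∂P
        = ∫ ω, ν ω ∂P') :=
  ⟨fun _ hQ hQb => integral_XiDR_of_H_eq_condExp hPP' hGH hHG hG hHm hshared hν hνC hQ hQb,
    fun _ hH hHb =>
      integral_XiDR_of_Q_eq_condExp_rnDeriv hP'P hPP' hG hHm hshared hν hνC hH hHb⟩
end

section
/- (Score construction for the tangent space.) Let (Ω, 𝓕, P) be a probability space and let g : Ω → ℝ be a bounded measurable function with ∫ g dP = 0. For each real ε with |ε| · sup|g| < 1, define the measure P_ε on (Ω, 𝓕) by dP_ε = (1 + ε g) dP. Then: (i) each P_ε is a probability measure with P_ε ≪ P and P ≪ P_ε; (ii) for every bounded measurable f, the map ε ↦ ∫ f dP_ε is differentiable at ε = 0 with derivative ∫ f g dP; and (iii) the parametric submodel {P_ε} is differentiable in quadratic mean at ε = 0 with score g: the functions ε^{-1}(√(1 + ε g) − 1) converge to g/2 in L²(P) as ε → 0. (This exhibits every bounded mean-zero function as a score of a one-dimensional parametric submodel through P, the key step in showing the tangent space at P is all of L²₀(P).) -/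
/-!
Writing `s = √(1 + x)`, one has `√(1 + x) - 1 - x/2 = -(s - 1)²/2` and `|s - 1| ≤ |x|`, so
`ε⁻¹(√(1 + εg) - 1) - g/2` is bounded pointwise by `|ε| g²/2 ≤ |ε| C²/2`; this gives the
quadratic-mean differentiability with an explicit rate. The other two parts only use that the
density `1 + εg` is positive for small `ε`, has `P`-integral `1` because `g` is centred, and is
affine in `ε`, so `∫ f dP_ε = ∫ f dP + ε ∫ f g dP`.
-/

open MeasureTheory Filter Topology
open scoped ENNReal

noncomputable def scorePerturb {Ω : Type*} [MeasurableSpace Ω] (P : Measure Ω)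
    (g : Ω → ℝ) (ε : ℝ) : Measure Ω :=
  P.withDensity (fun ω => ENNReal.ofReal (1 + ε * g ω))

lemma Real.abs_sqrt_one_add_sub_one_le {x : ℝ} (hx : -1 ≤ x) : |√(1 + x) - 1| ≤ |x| := by
  have hfactor : x = (√(1 + x) - 1) * (√(1 + x) + 1) := by
    linear_combination -Real.sq_sqrt (show 0 ≤ 1 + x by linarith)
  conv_rhs => rw [hfactor, abs_mul, abs_of_nonneg (by positivity : 0 ≤ √(1 + x) + 1)]
  exact le_mul_of_one_le_right (abs_nonneg _) (by linarith [Real.sqrt_nonneg (1 + x)])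

lemma Real.abs_sqrt_one_add_sub_one_sub_half_le {x : ℝ} (hx : -1 ≤ x) :
    |√(1 + x) - 1 - x / 2| ≤ x ^ 2 / 2 := by
  have hsq : √(1 + x) ^ 2 = 1 + x := Real.sq_sqrt (by linarith)
  have hsquare : √(1 + x) - 1 - x / 2 = -(√(1 + x) - 1) ^ 2 / 2 := by
    linear_combination (1 / 2 : ℝ) * hsq
  have hle : (√(1 + x) - 1) ^ 2 ≤ x ^ 2 := sq_le_sq.mpr (Real.abs_sqrt_one_add_sub_one_le hx)
  rw [hsquare, abs_div, abs_neg, abs_two, abs_sq]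
  linarith

lemma abs_inv_mul_sqrt_one_add_mul_sub_one_sub_half_le {ε y : ℝ} (hε : ε ≠ 0)
    (hy : 0 ≤ 1 + ε * y) :
    |ε⁻¹ * (√(1 + ε * y) - 1) - y / 2| ≤ |ε| * y ^ 2 / 2 := by
  have hεy : -1 ≤ ε * y := by linarith
  calc |ε⁻¹ * (√(1 + ε * y) - 1) - y / 2|
      = |ε|⁻¹ * |√(1 + ε * y) - 1 - ε * y / 2| := by
        rw [← abs_inv, ← abs_mul]; congr 1; field_simp
    _ ≤ |ε|⁻¹ * ((ε * y) ^ 2 / 2) := by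
        gcongr; exact Real.abs_sqrt_one_add_sub_one_sub_half_le hεy
    _ = |ε| * y ^ 2 / 2 := by
        rw [mul_pow, ← sq_abs ε]; field_simp

lemma one_add_mul_pos_of_abs_le {ε y C : ℝ} (hy : |y| ≤ C) (hε : |ε| * C < 1) :
    0 < 1 + ε * y := by
  have hεy : |ε * y| ≤ |ε| * C := by
    rw [abs_mul]; exact mul_le_mul_of_nonneg_left hy (abs_nonneg ε)
  linarith [neg_abs_le (ε * y)]

lemma eventually_abs_mul_lt_one (C : ℝ) : ∀ᶠ ε in 𝓝 (0 : ℝ), |ε| * C < 1 := by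
  have hcont : Tendsto (fun ε : ℝ => |ε| * C) (𝓝 0) (𝓝 (|0| * C)) :=
    (continuous_abs.mul continuous_const).tendsto 0
  exact hcont.eventually_lt_const (by simp)

section scorePerturb

variable {Ω : Type*} [MeasurableSpace Ω] {P : Measure Ω} {g : Ω → ℝ} {ε : ℝ}

lemma integral_scorePerturb (hg : Measurable g) (hpos : ∀ ω, 0 ≤ 1 + ε * g ω) (f : Ω → ℝ) :
    ∫ ω, f ω ∂(scorePerturb P g ε) = ∫ ω, (1 + ε * g ω) * f ω ∂P := by
  rw [scorePerturb, integral_withDensity_eq_integral_toReal_smul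
    ((hg.const_mul ε).const_add 1).ennreal_ofReal (ae_of_all _ fun _ => ENNReal.ofReal_lt_top)]
  simp only [ENNReal.toReal_ofReal (hpos _), smul_eq_mul]

lemma isProbabilityMeasure_scorePerturb [IsProbabilityMeasure P] (hgi : Integrable g P)
    (hmean : ∫ ω, g ω ∂P = 0) (hpos : ∀ ω, 0 ≤ 1 + ε * g ω) :
    IsProbabilityMeasure (scorePerturb P g ε) := by
  have hdensity : Integrable (fun ω => 1 + ε * g ω) P := (integrable_const 1).add (hgi.const_mul ε)
  constructor
  rw [scorePerturb, withDensity_apply _ MeasurableSet.univ, Measure.restrict_univ,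
    ← ofReal_integral_eq_lintegral_ofReal hdensity (ae_of_all _ hpos),
    integral_add (integrable_const 1) (hgi.const_mul ε), integral_const_mul, hmean]
  simp

lemma scorePerturb_absolutelyContinuous : scorePerturb P g ε ≪ P :=
  withDensity_absolutelyContinuous _ _

lemma absolutelyContinuous_scorePerturb (hg : Measurable g) (hpos : ∀ ω, 0 < 1 + ε * g ω) :
    P ≪ scorePerturb P g ε :=
  withDensity_absolutelyContinuous' ((hg.const_mul ε).const_add 1).ennreal_ofReal.aemeasurable
    (ae_of_all _ fun ω => (ENNReal.ofReal_pos.mpr (hpos ω)).ne')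

lemma hasDerivAt_integral_scorePerturb {C : ℝ} (hg : Measurable g) (hgC : ∀ ω, |g ω| ≤ C)
    {f : Ω → ℝ} (hf : Integrable f P) :
    HasDerivAt (fun ε : ℝ => ∫ ω, f ω ∂(scorePerturb P g ε)) (∫ ω, f ω * g ω ∂P) 0 := by
  have hfg : Integrable (fun ω => f ω * g ω) P :=
    hf.mul_bdd hg.aestronglyMeasurable (ae_of_all _ hgC)
  have haffine : HasDerivAt (fun ε : ℝ => ∫ ω, f ω ∂P + ε * ∫ ω, f ω * g ω ∂P)
      (∫ ω, f ω * g ω ∂P) 0 := (hasDerivAt_mul_const _).const_add _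
  refine haffine.congr_of_eventuallyEq ?_
  filter_upwards [eventually_abs_mul_lt_one C] with ε hε
  rw [integral_scorePerturb hg (fun ω => (one_add_mul_pos_of_abs_le (hgC ω) hε).le),
    ← integral_const_mul, ← integral_add hf (hfg.const_mul ε)]
  congr 1 with ω
  ring

end scorePerturb

section quadraticMean

variable {Ω : Type*} [MeasurableSpace Ω] {P : Measure Ω} [IsProbabilityMeasure P]
  {g : Ω → ℝ} {C : ℝ}

lemma eLpNorm_slope_sqrt_sub_half_le (p : ℝ≥0∞) (hgC : ∀ ω, |g ω| ≤ C) {ε : ℝ} (hε : ε ≠ 0)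
    (hpos : ∀ ω, 0 ≤ 1 + ε * g ω) :
    eLpNorm (fun ω => ε⁻¹ * (√(1 + ε * g ω) - 1) - g ω / 2) p P
      ≤ ENNReal.ofReal (|ε| * C ^ 2 / 2) := by
  refine (eLpNorm_le_of_ae_bound (C := |ε| * C ^ 2 / 2) (ae_of_all _ fun ω => ?_)).trans_eq
    (by simp)
  have hg2 : g ω ^ 2 ≤ C ^ 2 := by
    rw [← sq_abs]; exact pow_le_pow_left₀ (abs_nonneg _) (hgC ω) 2
  calc ‖ε⁻¹ * (√(1 + ε * g ω) - 1) - g ω / 2‖ ≤ |ε| * g ω ^ 2 / 2 :=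
        abs_inv_mul_sqrt_one_add_mul_sub_one_sub_half_le hε (hpos ω)
    _ ≤ |ε| * C ^ 2 / 2 := by gcongr

lemma tendsto_eLpNorm_slope_sqrt_sub_half (p : ℝ≥0∞) (hgC : ∀ ω, |g ω| ≤ C) :
    Tendsto (fun ε : ℝ => eLpNorm (fun ω => ε⁻¹ * (√(1 + ε * g ω) - 1) - g ω / 2) p P)
      (𝓝[≠] 0) (𝓝 0) := by
  have hrate : Tendsto (fun ε : ℝ => ENNReal.ofReal (|ε| * C ^ 2 / 2)) (𝓝[≠] 0) (𝓝 0) := by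
    have hcont : Continuous fun ε : ℝ => ENNReal.ofReal (|ε| * C ^ 2 / 2) :=
      ENNReal.continuous_ofReal.comp (by fun_prop)
    simpa using (hcont.tendsto 0).mono_left nhdsWithin_le_nhds
  refine tendsto_of_tendsto_of_tendsto_of_le_of_le' tendsto_const_nhds hrate
    (Eventually.of_forall fun _ => bot_le) ?_
  filter_upwards [self_mem_nhdsWithin, nhdsWithin_le_nhds (eventually_abs_mul_lt_one C)]
    with ε hε hεC
  exact eLpNorm_slope_sqrt_sub_half_le p hgC hε
    fun ω => (one_add_mul_pos_of_abs_le (hgC ω) hεC).le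

end quadraticMean

/-- Score construction for the tangent space: let `g` be bounded, measurable
and `P`-mean zero, and set `dP_ε = (1 + ε g) dP`. Then (i) for `|ε|·sup|g| < 1`
each `P_ε` is a probability measure equivalent to `P`; (ii) for every bounded
measurable `f`, `ε ↦ ∫ f dP_ε` is differentiable at `0` with derivative
`∫ f g dP`; (iii) the submodel is differentiable in quadratic mean at `0` with
score `g`: `ε⁻¹(√(1 + ε g) − 1) → g/2` in `L²(P)` as `ε → 0`. -/
theorem score_construction {Ω : Type*} [MeasurableSpace Ω]
    (P : Measure Ω) [IsProbabilityMeasure P]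
    (g : Ω → ℝ) (hg : Measurable g) (C : ℝ) (hgC : ∀ ω, |g ω| ≤ C)
    (hmean : ∫ ω, g ω ∂P = 0) :
    (∀ ε : ℝ, |ε| * C < 1 →
      IsProbabilityMeasure (scorePerturb P g ε) ∧
        scorePerturb P g ε ≪ P ∧ P ≪ scorePerturb P g ε) ∧
    (∀ f : Ω → ℝ, Measurable f → ∀ D : ℝ, (∀ ω, |f ω| ≤ D) →
      HasDerivAt (fun ε : ℝ => ∫ ω, f ω ∂(scorePerturb P g ε))
        (∫ ω, f ω * g ω ∂P) 0) ∧
    Tendsto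
      (fun ε : ℝ =>
        eLpNorm (fun ω => ε⁻¹ * (Real.sqrt (1 + ε * g ω) - 1) - g ω / 2) 2 P)
      (𝓝[≠] (0 : ℝ)) (𝓝 0) := by
  have hgi : Integrable g P := .of_bound hg.aestronglyMeasurable C (ae_of_all _ hgC)
  refine ⟨fun ε hε => ?_, fun f hf D hfD => ?_, tendsto_eLpNorm_slope_sqrt_sub_half 2 hgC⟩
  · have hpos : ∀ ω, 0 < 1 + ε * g ω := fun ω => one_add_mul_pos_of_abs_le (hgC ω) hε
    exact ⟨isProbabilityMeasure_scorePerturb hgi hmean fun ω => (hpos ω).le,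
      scorePerturb_absolutelyContinuous, absolutelyContinuous_scorePerturb hg hpos⟩
  · exact hasDerivAt_integral_scorePerturb hg hgC
      (.of_bound hf.aestronglyMeasurable D (ae_of_all _ hfD))
end

section
/- (Conditionally independent counterfactual copy.) Let X and Y be nonempty standard Borel spaces and let P be a probability measure on X × Y. Then there exists a probability measure Q on X × Y × Y such that: (i) the pushforward of Q under (x, y, y') ↦ (x, y) equals P; (ii) the pushforward of Q under (x, y, y') ↦ (x, y') equals P; and (iii) under Q, the second and third coordinates are conditionally independent given the σ-algebra generated by the first coordinate. (This construction — attaching to the observed data a copy of the outcome drawn independently from the same conditional law given the history — is the device used to extend any observed-data law P to a full-data law P^F on observed plus counterfactual variables that satisfies the sequential randomization and consistency assumptions while inducing P, showing the identification assumptions place no restriction on the observed data distribution.) -/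
open MeasureTheory ProbabilityTheory

/-!
Disintegrate `P = P.fst ⊗ₘ κ` and take `Q := P.fst ⊗ₘ (κ ×ₖ κ)`: given `x`, the outcome and its
counterfactual copy are drawn independently from `κ x`. Both `(x, y)`-marginals of `Q` are
`P.fst ⊗ₘ κ = P`. The conditional laws of both copies given `x` agree a.e. with `κ`, so `Q` is
the first marginal composed with the product of the two conditional laws, which is the
factorisation criterion for conditional independence.
-/

namespace ProbabilityTheory.Kernel

variable {α β γ : Type*} {mα : MeasurableSpace α} {mβ : MeasurableSpace β}
  {mγ : MeasurableSpace γ} {μ : Measure α}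

lemma prod_ae_congr {κ κ' : Kernel α β} {η η' : Kernel α γ} [IsSFiniteKernel κ]
    [IsSFiniteKernel κ'] [IsSFiniteKernel η] [IsSFiniteKernel η'] (hκ : κ =ᵐ[μ] κ')
    (hη : η =ᵐ[μ] η') : κ ×ₖ η =ᵐ[μ] κ' ×ₖ η' := by
  filter_upwards [hκ, hη] with a hκa hηa
  rw [prod_apply, prod_apply, hκa, hηa]

end ProbabilityTheory.Kernel

namespace MeasureTheory.Measure

variable {α β γ : Type*} {mα : MeasurableSpace α} {mβ : MeasurableSpace β}
  {mγ : MeasurableSpace γ}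

lemma compProd_prod_map_fst (μ : Measure α) [SFinite μ] (κ : Kernel α β) [IsSFiniteKernel κ]
    (η : Kernel α γ) [IsMarkovKernel η] :
    (μ ⊗ₘ (κ ×ₖ η)).map (Prod.map id Prod.fst) = μ ⊗ₘ κ := by
  rw [← compProd_map measurable_fst, ← Kernel.fst_eq, Kernel.fst_prod]

lemma compProd_prod_map_snd (μ : Measure α) [SFinite μ] (κ : Kernel α β) [IsMarkovKernel κ]
    (η : Kernel α γ) [IsSFiniteKernel η] :
    (μ ⊗ₘ (κ ×ₖ η)).map (Prod.map id Prod.snd) = μ ⊗ₘ η := by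
  rw [← compProd_map measurable_snd, ← Kernel.snd_eq, Kernel.snd_prod]

end MeasureTheory.Measure

section CondIndep

variable {α β γ : Type*} {mα : MeasurableSpace α} {mβ : MeasurableSpace β}
  {mγ : MeasurableSpace γ} [StandardBorelSpace α] [StandardBorelSpace β] [Nonempty β]
  [StandardBorelSpace γ] [Nonempty γ]

theorem condIndepFun_compProd_prod (μ : Measure α) [IsFiniteMeasure μ] (κ : Kernel α β)
    [IsMarkovKernel κ] (η : Kernel α γ) [IsMarkovKernel η] :
    (fun p : α × β × γ => p.2.1) ⟂ᵢ[Prod.fst, measurable_fst; μ ⊗ₘ (κ ×ₖ η)]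
      (fun p : α × β × γ => p.2.2) := by
  have hQ_fst : (μ ⊗ₘ (κ ×ₖ η)).map Prod.fst = μ := Measure.fst_compProd μ (κ ×ₖ η)
  have hκ := condDistrib_ae_eq_of_measure_eq_compProd (μ := μ ⊗ₘ (κ ×ₖ η))
    (Y := fun p => p.2.1) Prod.fst (by fun_prop) (κ := κ)
    (by rw [hQ_fst]; exact Measure.compProd_prod_map_fst μ κ η)
  have hη := condDistrib_ae_eq_of_measure_eq_compProd (μ := μ ⊗ₘ (κ ×ₖ η))
    (Y := fun p => p.2.2) Prod.fst (by fun_prop) (κ := η)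
    (by rw [hQ_fst]; exact Measure.compProd_prod_map_snd μ κ η)
  rw [hQ_fst] at hκ hη
  rw [condIndepFun_iff_map_prod_eq_prod_condDistrib_prod_condDistrib (by fun_prop) (by fun_prop)
    measurable_fst, hQ_fst, ← Measure.compProd_eq_comp_prod,
    Measure.compProd_congr (Kernel.prod_ae_congr hκ hη)]
  exact Measure.map_id

end CondIndep

theorem exists_condIndep_counterfactual_copy_general {X Y : Type*}
    [MeasurableSpace X] [MeasurableSpace Y]
    [StandardBorelSpace X] [StandardBorelSpace Y] [Nonempty Y]
    (P : Measure (X × Y)) [IsProbabilityMeasure P] :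
    ∃ (Q : Measure (X × Y × Y)) (_ : IsProbabilityMeasure Q),
      Q.map (fun p => (p.1, p.2.1)) = P ∧
      Q.map (fun p => (p.1, p.2.2)) = P ∧
      CondIndepFun (MeasurableSpace.comap (fun p : X × Y × Y => p.1) inferInstance)
        (measurable_fst.comap_le)
        (fun p : X × Y × Y => p.2.1) (fun p : X × Y × Y => p.2.2) Q := by
  refine ⟨P.fst ⊗ₘ (P.condKernel ×ₖ P.condKernel), inferInstance, ?_, ?_,
    condIndepFun_compProd_prod P.fst P.condKernel P.condKernel⟩
  · exact (Measure.compProd_prod_map_fst _ _ _).trans (P.disintegrate _)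
  · exact (Measure.compProd_prod_map_snd _ _ _).trans (P.disintegrate _)

/-- Conditionally independent counterfactual copy: for nonempty standard Borel
spaces `X, Y` and a probability measure `P` on `X × Y`, there is a probability
measure `Q` on `X × Y × Y` whose `(x, y)`- and `(x, y')`-marginals both equal
`P`, and under which the second and third coordinates are conditionally
independent given the σ-algebra generated by the first coordinate. -/
theorem exists_condIndep_counterfactual_copy {X Y : Type*}
    [MeasurableSpace X] [MeasurableSpace Y]
    [StandardBorelSpace X] [StandardBorelSpace Y] [Nonempty X] [Nonempty Y]
    (P : Measure (X × Y)) [IsProbabilityMeasure P] :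
    ∃ (Q : Measure (X × Y × Y)) (_ : IsProbabilityMeasure Q),
      Q.map (fun p => (p.1, p.2.1)) = P ∧
      Q.map (fun p => (p.1, p.2.2)) = P ∧
      CondIndepFun (MeasurableSpace.comap (fun p : X × Y × Y => p.1) inferInstance)
        (measurable_fst.comap_le)
        (fun p : X × Y × Y => p.2.1) (fun p : X × Y × Y => p.2.2) Q :=
  exists_condIndep_counterfactual_copy_general P
end
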